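/- arXiv:2111.02970 — 2 statements merged into one kernel-verified Lean document; each statement's English description precedes it below -/
import Mathlib

section
/- Let f : ℝ^d → ℝ be continuous, K ⊂ ℝ^d compact, 𝓐 : ℝ^d → ℝ^m continuous with feasible set B = {x ∈ K : 𝓐(x) = 0} nonempty, and suppose the constrained minimizer x* of f over B is unique. For ν > 0 let x_ν ∈ K minimize g_ν(x) = f(x) + (1/ν)|𝓐(x)|² over K. Then every accumulation point of (x_ν) as ν → 0 belongs to B and minimizes f over B; hence x_ν → x*. -/
/-!
Comparing `x_ν` with a feasible point `y` in the penalized problem gives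
`f (x_ν) + ν⁻¹ ‖𝓐 (x_ν)‖² ≤ f y`. Hence `f (x_ν) ≤ f y` and, `f` being bounded below on `K` by
some `c`, `‖𝓐 (x_ν)‖² ≤ ν (f y - c) → 0`. Both bounds pass to cluster points by closedness, so
every cluster point is a feasible minimizer; uniqueness of `x*` and compactness of `K` then force
`x_ν → x*`.
-/

open Filter Topology

section

variable {X E : Type*} [NormedAddCommGroup E] {f : X → ℝ} {A : X → E} {K : Set X}

noncomputable def penalized (f : X → ℝ) (A : X → E) (ν : ℝ) (y : X) : ℝ :=
  f y + ν⁻¹ * ‖A y‖ ^ 2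

lemma penalized_of_eq_zero {ν : ℝ} {y : X} (hy : A y = 0) : penalized f A ν y = f y := by
  simp [penalized, hy]

lemma le_penalized {ν : ℝ} (hν : 0 ≤ ν) (y : X) : f y ≤ penalized f A ν y :=
  le_add_of_nonneg_right (by positivity)

namespace IsMinOn

variable {ν c : ℝ} {x₀ y : X}

lemma penalized_le (h : IsMinOn (penalized f A ν) K x₀) (hyK : y ∈ K) (hy : A y = 0) :
    penalized f A ν x₀ ≤ f y :=
  penalized_of_eq_zero (f := f) (ν := ν) hy ▸ h hyK

lemma le_of_penalized (hν : 0 ≤ ν) (h : IsMinOn (penalized f A ν) K x₀) (hyK : y ∈ K)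
    (hy : A y = 0) : f x₀ ≤ f y :=
  (le_penalized hν x₀).trans (h.penalized_le hyK hy)

lemma sq_norm_le_of_penalized (hν : 0 < ν) (h : IsMinOn (penalized f A ν) K x₀)
    (hyK : y ∈ K) (hy : A y = 0) (hc : c ≤ f x₀) : ‖A x₀‖ ^ 2 ≤ ν * (f y - c) := by
  rw [← inv_mul_le_iff₀ hν]
  have := h.penalized_le hyK hy
  rw [penalized] at this
  linarith

end IsMinOn

variable {x : ℝ → X} {y₀ : X}

lemma tendsto_penalty_nhds_zero {c : ℝ} (hxmin : ∀ ν > 0, IsMinOn (penalized f A ν) K (x ν))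
    (hxK : ∀ ν > 0, x ν ∈ K) (hc : ∀ y ∈ K, c ≤ f y) (hy₀K : y₀ ∈ K) (hy₀ : A y₀ = 0) :
    Tendsto (A ∘ x) (𝓝[>] 0) (𝓝 0) := by
  have hbound : ∀ ν > 0, ‖A (x ν)‖ ≤ √(ν * (f y₀ - c)) := fun ν hν =>
    Real.le_sqrt_of_sq_le <|
      (hxmin ν hν).sq_norm_le_of_penalized hν hy₀K hy₀ (hc _ (hxK ν hν))
  have hsqrt : Tendsto (fun ν : ℝ => √(ν * (f y₀ - c))) (𝓝[>] 0) (𝓝 0) := by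
    have : Continuous fun ν : ℝ => √(ν * (f y₀ - c)) := by fun_prop
    simpa using (this.tendsto 0).mono_left nhdsWithin_le_nhds
  exact tendsto_zero_iff_norm_tendsto_zero.2 <| squeeze_zero' (.of_forall fun _ => norm_nonneg _)
    (eventually_nhdsWithin_of_forall hbound) hsqrt

lemma mapClusterPt_feasible_isMinOn [TopologicalSpace X] [T2Space X] (hK : IsCompact K) (hf : Continuous f)
    (hA : Continuous A) (hxmin : ∀ ν > 0, IsMinOn (penalized f A ν) K (x ν))
    (hxK : ∀ ν > 0, x ν ∈ K) (hy₀K : y₀ ∈ K) (hy₀ : A y₀ = 0) {z : X}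
    (hz : MapClusterPt z (𝓝[>] 0) x) :
    z ∈ {y ∈ K | A y = 0} ∧ IsMinOn f {y ∈ K | A y = 0} z := by
  obtain ⟨c, -, hc⟩ := hK.exists_isMinOn ⟨y₀, hy₀K⟩ hf.continuousOn
  have hzK : z ∈ K := hK.isClosed.mem_of_mapClusterPt hz (eventually_nhdsWithin_of_forall hxK)
  have hAz : A z = 0 := eq_of_nhds_neBot <|
    (hz.continuousAt_comp hA.continuousAt).clusterPt.mono <|
      tendsto_penalty_nhds_zero hxmin hxK (fun y hy => hc hy) hy₀K hy₀
  refine ⟨⟨hzK, hAz⟩, fun y ⟨hyK, hy⟩ => ?_⟩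
  exact isClosed_Iic.mem_of_mapClusterPt (hz.continuousAt_comp hf.continuousAt) <|
    eventually_nhdsWithin_of_forall fun ν hν => (hxmin ν hν).le_of_penalized hν.le hyK hy

end

/-- Convergence of penalized minimizers: if for each `ν > 0`, `x_ν` minimizes
`g_ν = f + ν⁻¹|𝓐|²` over the compact set `K`, then every accumulation point of
`(x_ν)` as `ν → 0⁺` is feasible and minimizes `f` over the feasible set
`B = {x ∈ K : 𝓐(x) = 0}`; by uniqueness of the constrained minimizer `x*`,
it follows that `x_ν → x*` as `ν → 0⁺`. -/
theorem penalty_minimizers_converge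
    {d m : ℕ} (f : EuclideanSpace ℝ (Fin d) → ℝ) (hf : Continuous f)
    (K : Set (EuclideanSpace ℝ (Fin d))) (hK : IsCompact K)
    (A : EuclideanSpace ℝ (Fin d) → EuclideanSpace ℝ (Fin m)) (hA : Continuous A)
    (B : Set (EuclideanSpace ℝ (Fin d))) (hB : B = {x ∈ K | A x = 0})
    (xstar : EuclideanSpace ℝ (Fin d)) (hxstarB : xstar ∈ B)
    (hxstar : ∀ y ∈ B, y ≠ xstar → f xstar < f y)
    (x : ℝ → EuclideanSpace ℝ (Fin d))
    (hxK : ∀ ν : ℝ, 0 < ν → x ν ∈ K)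
    (hxmin : ∀ ν : ℝ, 0 < ν →
      ∀ y ∈ K, f (x ν) + ν⁻¹ * ‖A (x ν)‖ ^ 2 ≤ f y + ν⁻¹ * ‖A y‖ ^ 2) :
    (∀ z, MapClusterPt z (nhdsWithin (0 : ℝ) (Set.Ioi 0)) x →
        z ∈ B ∧ ∀ y ∈ B, f z ≤ f y) ∧
      Tendsto x (nhdsWithin (0 : ℝ) (Set.Ioi 0)) (nhds xstar) := by
  subst hB
  have hcluster (z) (hz : MapClusterPt z (𝓝[>] 0) x) :
      z ∈ {x ∈ K | A x = 0} ∧ IsMinOn f {x ∈ K | A x = 0} z :=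
    mapClusterPt_feasible_isMinOn hK hf hA (fun ν hν => isMinOn_iff.2 (hxmin ν hν)) hxK
      hxstarB.1 hxstarB.2 hz
  refine ⟨fun z hz => (hcluster z hz).imp_right isMinOn_iff.1, ?_⟩
  refine hK.tendsto_nhds_of_unique_mapClusterPt (eventually_nhdsWithin_of_forall hxK)
    fun z _ hz => ?_
  obtain ⟨hzB, hzmin⟩ := hcluster z hz
  by_contra hne
  exact (hzmin hxstarB).not_gt (hxstar z hzB hne)
end

section
/- Suppose the forward map is linear, G(x) = G x for a matrix G ∈ ℝ^{K×d}. Then the EKI particle dynamics dx^{(j)} = −(1/J) ∑_k ⟨G(x^{(k)}) − Ḡ, G(x^{(j)}) − y⟩_Γ (x^{(k)} − x̄) dt − C(μ^J) Σ^{−1}(x^{(j)} − a) dt coincides with the preconditioned gradient flow dx^{(j)} = −C(μ^J) ∇Φ_R(x^{(j)}) dt, where Φ_R(x) = ½|Γ^{−1/2}(y − Gx)|² + ½|Σ^{−1/2}(x − a)|² and C(μ^J) = (1/J) ∑_k (x^{(k)} − x̄) ⊗ (x^{(k)} − x̄). -/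
/-!
For a symmetric weight `A`, the gradient of `z ↦ ½⟪Lz - y, A(Lz - y)⟫` is `Lᵀ A (Lz - y)`, so
`∇Φ_R(x) = Gᵀ Γ⁻¹ (Gx - y) + Σ⁻¹ (x - a)`. Applying the ensemble covariance `C` to the first
summand gives `(1/J) ∑ₖ ⟪G(x⁽ᵏ⁾ - x̄), Γ⁻¹(Gx⁽ʲ⁾ - y)⟫ (x⁽ᵏ⁾ - x̄)`, and linearity of `G` turns
`G x̄` into `Ḡ`: this is exactly the data-misfit part of the EKI drift.
-/

open scoped RealInnerProductSpace

variable {E F : Type*} [NormedAddCommGroup E] [InnerProductSpace ℝ E]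
  [NormedAddCommGroup F] [InnerProductSpace ℝ F]

theorem HasGradientAt.add [CompleteSpace E] {f g : E → ℝ} {f' g' x : E}
    (hf : HasGradientAt f f' x) (hg : HasGradientAt g g' x) :
    HasGradientAt (fun z => f z + g z) (f' + g') x := by
  rw [hasGradientAt_iff_hasFDerivAt] at *
  rw [map_add]
  exact hf.add hg

theorem HasGradientAt.comp_linearMap_sub_const [FiniteDimensional ℝ E] [FiniteDimensional ℝ F]
    {f : F → ℝ} {g : F} (L : E →ₗ[ℝ] F) (c : F) {x : E} (hf : HasGradientAt f g (L x - c)) :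
    HasGradientAt (fun z => f (L z - c)) (L.adjoint g) x := by
  rw [hasGradientAt_iff_hasFDerivAt] at *
  refine (hf.comp x (L.toContinuousLinearMap.hasFDerivAt.sub_const c)).congr_fderiv ?_
  ext v
  simp [LinearMap.adjoint_inner_left]

theorem LinearMap.IsSymmetric.hasGradientAt_half_inner_self [FiniteDimensional ℝ E]
    {A : E →ₗ[ℝ] E} (hA : A.IsSymmetric) (x : E) :
    HasGradientAt (fun z => (1 / 2) * ⟪z, A z⟫) (A x) x := by
  have hT : (A.toContinuousLinearMap : E →ₗ[ℝ] E).IsSymmetric := hA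
  have h := (hT.hasStrictFDerivAt_reApplyInnerSelf x).hasFDerivAt.const_mul (1 / 2 : ℝ)
  rw [hasGradientAt_iff_hasFDerivAt]
  refine h.congr_of_eventuallyEq (.of_eq ?_) |>.congr_fderiv ?_
  · ext z
    simp [ContinuousLinearMap.reApplyInnerSelf_apply, real_inner_comm]
  · ext v
    simp

theorem hasGradientAt_regularizedLeastSquares [FiniteDimensional ℝ E] [FiniteDimensional ℝ F]
    {A : F →ₗ[ℝ] F} (hA : A.IsSymmetric) {B : E →ₗ[ℝ] E} (hB : B.IsSymmetric)
    (L : E →ₗ[ℝ] F) (y : F) (a x : E) :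
    HasGradientAt (fun z => (1 / 2) * ⟪y - L z, A (y - L z)⟫ + (1 / 2) * ⟪z - a, B (z - a)⟫)
      (L.adjoint (A (L x - y)) + B (x - a)) x := by
  have hmisfit : HasGradientAt (fun z => (1 / 2) * ⟪L z - y, A (L z - y)⟫)
      (L.adjoint (A (L x - y))) x :=
    (hA.hasGradientAt_half_inner_self _).comp_linearMap_sub_const L y
  have hpenalty : HasGradientAt (fun z => (1 / 2) * ⟪z - a, B (z - a)⟫) (B (x - a)) x := by
    simpa using (hB.hasGradientAt_half_inner_self _).comp_linearMap_sub_const LinearMap.id a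
  have hflip (z : E) : ⟪y - L z, A (y - L z)⟫ = ⟪L z - y, A (L z - y)⟫ := by
    rw [← neg_sub, map_neg, inner_neg_neg]
  simpa only [hflip] using hmisfit.add hpenalty

/-- For a linear forward map `G(x) = Gx`, the (regularized) EKI drift coincides,
for each ensemble member `j`, with a gradient descent preconditioned by the
ensemble covariance: `−(1/J)∑ₖ ⟨Gx⁽ᵏ⁾ − Ḡ, Gx⁽ʲ⁾ − y⟩_Γ (x⁽ᵏ⁾ − x̄) − C(μᴶ)Σ⁻¹(x⁽ʲ⁾ − a)
= −C(μᴶ) ∇Φ_R(x⁽ʲ⁾)`, where `Φ_R(x) = ½⟨y − Gx, Γ⁻¹(y − Gx)⟩ + ½⟨x − a, Σ⁻¹(x − a)⟩`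
and `C(μᴶ)v = (1/J)∑ₖ ⟨x⁽ᵏ⁾ − x̄, v⟩ (x⁽ᵏ⁾ − x̄)`. -/
theorem eki_linear_is_preconditioned_gradient_flow
    {d K J : ℕ}
    (G : Matrix (Fin K) (Fin d) ℝ)
    (Γ : Matrix (Fin K) (Fin K) ℝ) (hΓ : Γ.PosDef)
    (S : Matrix (Fin d) (Fin d) ℝ) (hS : S.PosDef)
    (y : EuclideanSpace ℝ (Fin K)) (a : EuclideanSpace ℝ (Fin d))
    (x : Fin J → EuclideanSpace ℝ (Fin d))
    (xbar : EuclideanSpace ℝ (Fin d)) (hxbar : xbar = (J : ℝ)⁻¹ • ∑ k, x k)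
    (Gbar : EuclideanSpace ℝ (Fin K))
    (hGbar : Gbar = (J : ℝ)⁻¹ • ∑ k, G.toEuclideanLin (x k))
    (C : EuclideanSpace ℝ (Fin d) →ₗ[ℝ] EuclideanSpace ℝ (Fin d))
    (hC : ∀ v, C v = (J : ℝ)⁻¹ • ∑ k, ⟪x k - xbar, v⟫ • (x k - xbar))
    (ΦR : EuclideanSpace ℝ (Fin d) → ℝ)
    (hΦR : ∀ z, ΦR z =
      (1 / 2) * ⟪y - G.toEuclideanLin z, Γ⁻¹.toEuclideanLin (y - G.toEuclideanLin z)⟫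
        + (1 / 2) * ⟪z - a, S⁻¹.toEuclideanLin (z - a)⟫)
    (j : Fin J) :
    -((J : ℝ)⁻¹ • ∑ k, ⟪G.toEuclideanLin (x k) - Gbar,
          Γ⁻¹.toEuclideanLin (G.toEuclideanLin (x j) - y)⟫ • (x k - xbar))
        - C (S⁻¹.toEuclideanLin (x j - a))
      = -C (gradient ΦR (x j)) := by
  set L := G.toEuclideanLin
  have hΓsymm := Matrix.isSymmetric_toEuclideanLin_iff.mpr hΓ.isHermitian.inv
  have hSsymm := Matrix.isSymmetric_toEuclideanLin_iff.mpr hS.isHermitian.inv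
  have hgrad : gradient ΦR (x j)
      = L.adjoint (Γ⁻¹.toEuclideanLin (L (x j) - y)) + S⁻¹.toEuclideanLin (x j - a) := by
    rw [funext hΦR]
    exact (hasGradientAt_regularizedLeastSquares hΓsymm hSsymm L y a (x j)).gradient
  have hLxbar : L xbar = Gbar := by rw [hxbar, hGbar, map_smul, map_sum]
  have hcov (w : EuclideanSpace ℝ (Fin K)) :
      C (L.adjoint w) = (J : ℝ)⁻¹ • ∑ k, ⟪L (x k) - Gbar, w⟫ • (x k - xbar) := by
    simp only [hC, LinearMap.adjoint_inner_right, map_sub, hLxbar]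
  rw [hgrad, map_add, hcov]
  abel
end
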